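/- arXiv:2002.03708 — 9 statements merged into one kernel-verified Lean document; each statement's English description precedes it below -/
import Mathlib

section
/- Let f = c₁X^{e₁} + ⋯ + c_t X^{e_t} be a multivariate polynomial over a finite field F_q with distinct exponent vectors e₁,…,e_t ∈ ℕⁿ, each coordinate of each eᵢ less than D. If a point α = (α₁,…,αₙ) is chosen uniformly at random from (F_q*)ⁿ, then the probability that α^{eᵢ} ≠ α^{eⱼ} for all i ≠ j is at least 1 − D·t·(t−1)/(2(q−1)). -/
/-!
Two distinct exponent vectors `a ≠ b` with, say, `b l₀ < a l₀` agree at `α` exactly when `α` lies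
in the kernel of the homomorphism `α ↦ α ^ a / α ^ b` from `(F_q*)ⁿ` to `F_q*`. Its image contains
every `(a l₀ - b l₀)`-th power, hence at least `(q - 1) / D` elements, so the kernel has at most
`D (q - 1)ⁿ⁻¹` elements. A union bound over the `t (t - 1) / 2` pairs gives the theorem.
-/

open scoped Classical

open Finset

theorem MonoidHom.card_ker_mul_card_le_of_range_le {G H K : Type*} [Group G] [Group H] [Group K]
    [Finite G] [Finite H] (φ : H →* K) (f : G →* K) (hf : f.range ≤ φ.range) :
    Nat.card φ.ker * Nat.card G ≤ Nat.card H * Nat.card f.ker := by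
  have hφ : Nat.card φ.ker * Nat.card φ.range = Nat.card H := by
    rw [← φ.ker.card_mul_index, Subgroup.index_ker]
  have hf' : Nat.card f.ker * Nat.card f.range = Nat.card G := by
    rw [← f.ker.card_mul_index, Subgroup.index_ker]
  calc Nat.card φ.ker * Nat.card G
      = Nat.card φ.ker * Nat.card f.range * Nat.card f.ker := by rw [← hf']; ring
    _ ≤ Nat.card φ.ker * Nat.card φ.range * Nat.card f.ker := by
      have : Finite φ.range := Finite.of_surjective _ φ.rangeRestrict_surjective
      gcongr; exact Subgroup.card_le_of_le hf
    _ = Nat.card H * Nat.card f.ker := by rw [hφ]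

section monomial

variable {ι M : Type*} [Fintype ι] [CommMonoid M]

@[simps]
def monomialHom (a : ι → ℕ) : (ι → M) →* M where
  toFun α := ∏ l, α l ^ a l
  map_one' := by simp
  map_mul' α β := by simp [mul_pow, prod_mul_distrib]

theorem monomialHom_mulSingle [DecidableEq ι] (a : ι → ℕ) (l₀ : ι) (x : M) :
    monomialHom a (Pi.mulSingle l₀ x) = x ^ a l₀ := by
  rw [monomialHom_apply, Fintype.prod_eq_single l₀ fun l hl => by simp [Pi.mulSingle_eq_of_ne hl]]
  simp

end monomial

theorem card_filter_prod_pow_eq_mul_le_of_lt {R ι : Type*} [CommRing R] [IsDomain R] [Fintype Rˣ]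
    [Fintype ι] [DecidableEq ι] {a b : ι → ℕ} {l₀ : ι} (hlt : b l₀ < a l₀) :
    #{α : ι → Rˣ | ∏ l, α l ^ a l = ∏ l, α l ^ b l} * Fintype.card Rˣ ≤
      Fintype.card (ι → Rˣ) * (a l₀ - b l₀) := by
  set d := a l₀ - b l₀
  have : NeZero d := ⟨by omega⟩
  let φ : (ι → Rˣ) →* Rˣ := monomialHom a / monomialHom b
  have hker : Nat.card φ.ker = #{α : ι → Rˣ | ∏ l, α l ^ a l = ∏ l, α l ^ b l} := by
    rw [Nat.card_eq_fintype_card, Fintype.card_subtype]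
    simp [φ, div_eq_one]
  have hrange : (powMonoidHom d : Rˣ →* Rˣ).range ≤ φ.range := by
    rintro _ ⟨x, rfl⟩
    refine ⟨Pi.mulSingle l₀ x, ?_⟩
    simp only [φ, MonoidHom.div_apply, monomialHom_mulSingle, powMonoidHom_apply]
    rw [div_eq_iff_eq_mul, ← pow_add]; congr 1; omega
  have hcard := φ.card_ker_mul_card_le_of_range_le _ hrange
  rw [hker, ← rootsOfUnity_eq_ker, Nat.card_eq_fintype_card, Nat.card_eq_fintype_card] at hcard
  exact hcard.trans (Nat.mul_le_mul_left _ (card_rootsOfUnity R d))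

theorem card_filter_prod_pow_eq_mul_le {R ι : Type*} [CommRing R] [IsDomain R] [Fintype Rˣ]
    [Fintype ι] [DecidableEq ι] {a b : ι → ℕ} {D : ℕ} (hab : a ≠ b) (ha : ∀ l, a l < D)
    (hb : ∀ l, b l < D) :
    #{α : ι → Rˣ | ∏ l, α l ^ a l = ∏ l, α l ^ b l} * Fintype.card Rˣ ≤
      Fintype.card (ι → Rˣ) * D := by
  obtain ⟨l₀, hl₀⟩ := Function.ne_iff.1 hab
  rcases hl₀.lt_or_gt with hlt | hlt
  · simp_rw [eq_comm (a := ∏ l, _ ^ a l)]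
    exact (card_filter_prod_pow_eq_mul_le_of_lt hlt).trans
      (by gcongr; exact (Nat.sub_le _ _).trans (hb l₀).le)
  · exact (card_filter_prod_pow_eq_mul_le_of_lt hlt).trans
      (by gcongr; exact (Nat.sub_le _ _).trans (ha l₀).le)

theorem card_mul_le_card_filter_pairwise_ne_mul_add {X ι β : Type*} [Fintype X] [Fintype ι]
    [LinearOrder ι] [DecidableEq β] (v : X → ι → β) {N M : ℕ}
    (h : ∀ i j, i < j → #{x | v x i = v x j} * N ≤ M) :
    Fintype.card X * N ≤
      #{x | ∀ i j, i ≠ j → v x i ≠ v x j} * N + (Fintype.card ι).choose 2 * M := by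
  set pairs : Finset (ι × ι) := {p ∈ univ ×ˢ univ | p.1 < p.2}
  have hsub : ({x | ¬ ∀ i j, i ≠ j → v x i ≠ v x j} : Finset X) ⊆
      pairs.biUnion fun p => {x | v x p.1 = v x p.2} := by
    intro x hx
    simp only [mem_filter, mem_univ, true_and, not_forall, not_not] at hx
    obtain ⟨i, j, hij, heq⟩ := hx
    simp only [mem_biUnion, pairs, mem_filter, mem_product, mem_univ, true_and]
    rcases hij.lt_or_gt with hlt | hlt
    · exact ⟨(i, j), hlt, heq⟩
    · exact ⟨(j, i), hlt, heq.symm⟩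
  have hbad : #{x | ¬ ∀ i j, i ≠ j → v x i ≠ v x j} * N ≤ (Fintype.card ι).choose 2 * M :=
    calc #{x | ¬ ∀ i j, i ≠ j → v x i ≠ v x j} * N
        ≤ (∑ p ∈ pairs, #{x | v x p.1 = v x p.2}) * N := by
          gcongr; exact (card_le_card hsub).trans card_biUnion_le
      _ ≤ ∑ _p ∈ pairs, M := by
          rw [sum_mul]; exact sum_le_sum fun p hp => h _ _ (mem_filter.1 hp).2
      _ = (Fintype.card ι).choose 2 * M := by
          rw [sum_const, smul_eq_mul, card_product_filter_lt, card_univ]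
  rw [← card_univ, ← card_filter_add_card_filter_not (fun x => ∀ i j, i ≠ j → v x i ≠ v x j),
    add_mul]
  gcongr

theorem stmt0_general (F : Type*) [Field F] [Fintype F]
    (n t D : ℕ)
    (e : Fin t → Fin n → ℕ) (he : Function.Injective e)
    (hD : ∀ k i, e k i < D) :
    ((1 : ℝ) - (D : ℝ) * t * ((t : ℝ) - 1) / (2 * ((Fintype.card F : ℝ) - 1))) *
        (Fintype.card (Fin n → Fˣ)) ≤
      ((Finset.univ.filter (fun α : Fin n → Fˣ =>
        ∀ i j : Fin t, i ≠ j →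
          (∏ l, α l ^ e i l) ≠ (∏ l, α l ^ e j l))).card : ℝ) := by
  have hN : (Fintype.card F : ℝ) - 1 = Fintype.card Fˣ := by
    rw [Fintype.card_units, Nat.cast_sub Fintype.card_pos, Nat.cast_one]
  have hNpos : (0 : ℝ) < Fintype.card Fˣ := by exact_mod_cast Fintype.card_pos
  have hcount := card_mul_le_card_filter_pairwise_ne_mul_add
    (fun (α : Fin n → Fˣ) i => ∏ l, α l ^ e i l)
    fun i j hij => card_filter_prod_pow_eq_mul_le (R := F) (he.ne hij.ne) (hD i) (hD j)
  simp only [Fintype.card_fin] at hcount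
  replace hcount := (Nat.cast_le (α := ℝ)).2 hcount
  push_cast [Nat.cast_choose_two] at hcount
  -- re-synthesizes the decidability instances of the two filters so that they agree
  simp only [ne_eq] at hcount ⊢
  rw [hN]
  set N : ℝ := (Fintype.card Fˣ : ℝ)
  set K : ℝ := (Fintype.card (Fin n → Fˣ) : ℝ)
  rw [show (1 - D * t * (t - 1) / (2 * N)) * K = (K * N - t * (t - 1) / 2 * (K * D)) / N by
    field_simp, div_le_iff₀ hNpos]
  linarith

/-- probability that a uniformly random point of (F_q*)^n is a
"good point" (all monomial values pairwise distinct) is at least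
1 - D·t·(t-1)/(2(q-1)). -/
theorem stmt0 (F : Type*) [Field F] [Fintype F]
    (n t D : ℕ) (c : Fin t → F) (hc : ∀ k, c k ≠ 0)
    (e : Fin t → Fin n → ℕ) (he : Function.Injective e)
    (hD : ∀ k i, e k i < D) :
    ((1 : ℝ) - (D : ℝ) * t * ((t : ℝ) - 1) / (2 * ((Fintype.card F : ℝ) - 1))) *
        (Fintype.card (Fin n → Fˣ)) ≤
      ((Finset.univ.filter (fun α : Fin n → Fˣ =>
        ∀ i j : Fin t, i ≠ j →
          (∏ l, α l ^ e i l) ≠ (∏ l, α l ^ e j l))).card : ℝ) :=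
  stmt0_general F n t D e he hD
end

section
/- Let R be an integral domain, and let f, g ∈ R[x] be univariate polynomials such that f − g has at most T nonzero terms and degree less than D. If f ≡ g (mod x^p − 1) for more than T·log₂(D) distinct primes p, then f = g. -/
open Polynomial

private lemma key_dvd {R : Type*} [CommRing R] (h : Polynomial R) (p : ℕ) :
    (X ^ p - 1 : Polynomial R) ∣ h - ∑ e ∈ h.support, C (h.coeff e) * X ^ (e % p) := by
  nth_rewrite 1 [h.as_sum_support]
  rw [← Finset.sum_sub_distrib]
  apply Finset.dvd_sum
  intro e _
  rw [← C_mul_X_pow_eq_monomial, ← mul_sub]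
  apply Dvd.dvd.mul_left
  have hE : e % p + p * (e / p) = e := Nat.mod_add_div e p
  have he : (X : Polynomial R) ^ e - X ^ (e % p) = X ^ (e % p) * ((X ^ p) ^ (e / p) - 1) := by
    rw [mul_sub, mul_one, ← pow_mul, ← pow_add, hE]
  rw [he]
  exact Dvd.dvd.mul_left (by simpa using sub_dvd_pow_sub_pow ((X : Polynomial R) ^ p) 1 (e / p)) _

private lemma collision {R : Type*} [CommRing R] [IsDomain R] (h : Polynomial R) (hne : h ≠ 0)
    {p : ℕ} (hp : 0 < p) (hdvd : (X ^ p - 1 : Polynomial R) ∣ h) :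
    ∃ j ∈ h.support, j ≠ h.natDegree ∧ j % p = h.natDegree % p := by
  set r : Polynomial R := ∑ e ∈ h.support, C (h.coeff e) * X ^ (e % p) with hr
  have hmonic : Monic (X ^ p - 1 : Polynomial R) := by
    simpa using monic_X_pow_sub_C (1 : R) hp.ne'
  have hdr : (X ^ p - 1 : Polynomial R) ∣ r := by
    have h2 := key_dvd h p
    rw [← hr] at h2
    have h3 : r = h - (h - r) := by ring
    rw [h3]
    exact dvd_sub hdvd h2
  have hdeg : r.degree < (X ^ p - 1 : Polynomial R).degree := by
    have hdegq : (X ^ p - 1 : Polynomial R).degree = p := by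
      simpa using degree_X_pow_sub_C (R := R) hp 1
    rw [hdegq]
    apply lt_of_le_of_lt (degree_sum_le _ _)
    rw [Finset.sup_lt_iff (by exact_mod_cast WithBot.bot_lt_coe p)]
    intro e _
    calc (C (h.coeff e) * X ^ (e % p)).degree ≤ ((e % p : ℕ) : WithBot ℕ) :=
          degree_C_mul_X_pow_le _ _
      _ < ((p : ℕ) : WithBot ℕ) := by exact_mod_cast Nat.mod_lt e hp
  have hr0 : r = 0 := eq_zero_of_dvd_of_degree_lt hdr hdeg
  by_contra hcon
  push_neg at hcon
  have hcoeff : r.coeff (h.natDegree % p) = h.coeff h.natDegree := by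
    rw [hr, finset_sum_coeff]
    rw [Finset.sum_eq_single h.natDegree]
    · simp
    · intro j hj hjne
      have : j % p ≠ h.natDegree % p := hcon j hj hjne
      simp [coeff_C_mul, coeff_X_pow, this, Ne.symm this]
    · intro hns
      exact absurd (natDegree_mem_support_of_nonzero hne) hns
  rw [hr0] at hcoeff
  exact (leadingCoeff_ne_zero.mpr hne) hcoeff.symm

private lemma card_primeFactors_le {m D : ℕ} (hm : 0 < m) (hmD : m < D) :
    (m.primeFactors.card : ℝ) ≤ Real.logb 2 D := by
  have h2 : (2 : ℕ) ^ m.primeFactors.card ≤ m := by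
    calc (2:ℕ) ^ m.primeFactors.card ≤ ∏ p ∈ m.primeFactors, p :=
          Finset.pow_card_le_prod _ _ _ (fun q hq => (Nat.prime_of_mem_primeFactors hq).two_le)
      _ ≤ m := Nat.le_of_dvd hm (Nat.prod_primeFactors_dvd m)
  rw [Real.le_logb_iff_rpow_le one_lt_two (by exact_mod_cast (by omega : (0:ℕ) < D))]
  rw [Real.rpow_natCast]
  calc (2:ℝ) ^ m.primeFactors.card ≤ (m : ℝ) := by exact_mod_cast h2
    _ ≤ (D : ℝ) := by exact_mod_cast hmD.le

/-- deterministic zero-testing lemma of Bläser et al. -/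
theorem stmt2 (R : Type*) [CommRing R] [IsDomain R]
    (f g : Polynomial R) (T D : ℕ)
    (hT : (f - g).support.card ≤ T) (hD : (f - g).natDegree < D)
    (P : Finset ℕ) (hP : ∀ p ∈ P, p.Prime)
    (hcard : (T : ℝ) * Real.logb 2 D < (P.card : ℝ))
    (hmod : ∀ p ∈ P, f %ₘ (X ^ p - 1) = g %ₘ (X ^ p - 1)) :
    f = g := by
  by_contra hne
  set h := f - g with hh
  have hne' : h ≠ 0 := sub_ne_zero_of_ne hne
  set N := h.natDegree with hN
  -- every p in P divides N - j for some j in support, j ≠ N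
  have hdvd : ∀ p ∈ P, (X ^ p - 1 : Polynomial R) ∣ h := by
    intro p hp
    have hmonic : Monic (X ^ p - 1 : Polynomial R) := by
      simpa using monic_X_pow_sub_C (1 : R) (hP p hp).pos.ne'
    rw [← modByMonic_eq_zero_iff_dvd hmonic, hh, sub_modByMonic, hmod p hp, sub_self]
  have hsub : P ⊆ (h.support.erase N).biUnion (fun j => (N - j).primeFactors) := by
    intro p hp
    obtain ⟨j, hj, hjne, hjm⟩ := collision h hne' (hP p hp).pos (hdvd p hp)
    rw [Finset.mem_biUnion]
    refine ⟨j, Finset.mem_erase.mpr ⟨hjne, hj⟩, ?_⟩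
    have hjle : j ≤ N := le_natDegree_of_mem_supp j hj
    have hjlt : j < N := lt_of_le_of_ne hjle hjne
    have hpd : p ∣ N - j := (Nat.modEq_iff_dvd' hjle).mp hjm
    exact Nat.mem_primeFactors.mpr ⟨hP p hp, hpd, by omega⟩
  -- count
  have hlogD : ∀ j ∈ h.support.erase N, ((N - j).primeFactors.card : ℝ) ≤ Real.logb 2 D := by
    intro j hj
    obtain ⟨hjne, hjs⟩ := Finset.mem_erase.mp hj
    have hjlt : j < N := lt_of_le_of_ne (le_natDegree_of_mem_supp j hjs) hjne
    exact card_primeFactors_le (by omega) (by omega)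
  have hcard1 : (P.card : ℝ) ≤ (h.support.erase N).card * Real.logb 2 D := by
    calc (P.card : ℝ) ≤ (((h.support.erase N).biUnion (fun j => (N - j).primeFactors)).card : ℝ) :=
          by exact_mod_cast Finset.card_le_card hsub
      _ ≤ (∑ j ∈ h.support.erase N, (N - j).primeFactors.card : ℕ) := by
          exact_mod_cast Finset.card_biUnion_le
      _ = ∑ j ∈ h.support.erase N, ((N - j).primeFactors.card : ℝ) := by push_cast; ring
      _ ≤ ∑ _j ∈ h.support.erase N, Real.logb 2 D := Finset.sum_le_sum hlogD
      _ = (h.support.erase N).card * Real.logb 2 D := by rw [Finset.sum_const, nsmul_eq_mul]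
  have hlognn : 0 ≤ Real.logb 2 D := by
    apply Real.logb_nonneg one_lt_two
    have : 1 ≤ D := by omega
    exact_mod_cast this
  have hTle : ((h.support.erase N).card : ℝ) ≤ (T : ℝ) := by
    have : (h.support.erase N).card ≤ T := le_trans (Finset.card_erase_le) hT
    exact_mod_cast this
  have : (P.card : ℝ) ≤ (T : ℝ) * Real.logb 2 D :=
    hcard1.trans (mul_le_mul_of_nonneg_right hTle hlognn)
  linarith
end

section
/- Let f ∈ F_q[x] with char(F_q) > deg f and deg f < D, and let p be a prime. Suppose a·x^d is a nonzero term of f that is not a collision in f_p := f mod (x^p − 1). Write e = d mod p. Then the coefficient of x^e in f_p equals a, the coefficient of x^{e−1 mod p} in (f') mod (x^p − 1) contains the contribution a·d from this term, and in particular d can be recovered as the quotient (in F_q, lifted to ℕ) of that derivative coefficient by a, and d ∈ [0, D). -/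
open Polynomial

lemma dvd_X_pow_sub_X_pow_mod {F : Type*} [CommRing F] (p n : ℕ) :
    (X ^ p - 1 : F[X]) ∣ X ^ n - X ^ (n % p) := by
  have h : (X ^ n - X ^ (n % p) : F[X]) = ((X ^ p) ^ (n / p) - 1) * X ^ (n % p) := by
    rw [sub_mul, one_mul, ← pow_mul, ← pow_add, Nat.div_add_mod]
  rw [h]
  exact Dvd.dvd.mul_right (by simpa using sub_dvd_pow_sub_pow (X ^ p : F[X]) 1 (n / p)) _

lemma coeff_modByMonic_X_pow_sub_one {F : Type*} [Field F] (p : ℕ) (hp : 0 < p)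
    (g : F[X]) (d0 : ℕ) (h : ∀ i ∈ g.support, i ≠ d0 → i % p ≠ d0 % p) :
    (g %ₘ (X ^ p - 1)).coeff (d0 % p) = g.coeff d0 := by
  have hm : (X ^ p - 1 : F[X]).Monic := by
    simpa using monic_X_pow_sub_C (1 : F) hp.ne'
  set gr : F[X] := ∑ i ∈ g.support, C (g.coeff i) * X ^ (i % p) with hgr
  have hdvd : (X ^ p - 1 : F[X]) ∣ g - gr := by
    have hggr : g - gr = ∑ i ∈ g.support,
        (C (g.coeff i) * X ^ i - C (g.coeff i) * X ^ (i % p)) := by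
      rw [Finset.sum_sub_distrib, hgr]
      congr 1
      exact g.as_sum_support_C_mul_X_pow
    rw [hggr]
    apply Finset.dvd_sum
    intro i _
    rw [← mul_sub]
    exact Dvd.dvd.mul_left (dvd_X_pow_sub_X_pow_mod p i) _
  have h1 : g %ₘ (X ^ p - 1) = gr %ₘ (X ^ p - 1) :=
    modByMonic_eq_of_dvd_sub hm hdvd
  have hdeg : gr.degree < (X ^ p - 1 : F[X]).degree := by
    have hdp : (X ^ p - 1 : F[X]).degree = p := by
      simpa using degree_X_pow_sub_C hp (1 : F)
    rw [hdp, hgr]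
    apply lt_of_le_of_lt (degree_sum_le _ _)
    rw [Finset.sup_lt_iff (by exact_mod_cast WithBot.bot_lt_coe p)]
    intro i _
    exact lt_of_le_of_lt (degree_C_mul_X_pow_le _ _) (by exact_mod_cast Nat.mod_lt i hp)
  rw [h1, (modByMonic_eq_self_iff hm).2 hdeg, hgr, finset_sum_coeff]
  rw [Finset.sum_eq_single d0]
  · simp
  · intro i hi hne
    simp only [coeff_C_mul, coeff_X_pow]
    rw [if_neg fun heq => (h i hi hne) heq.symm, mul_zero]
  · intro hd0
    simp [Polynomial.notMem_support_iff.1 hd0]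

/-- recovering a non-colliding term of f from f mod (x^p-1) and
f' mod (x^p-1). -/
theorem stmt4 (F : Type*) [Field F] [Fintype F]
    (f : Polynomial F) (D : ℕ)
    (hchar : f.natDegree < ringChar F) (hD : f.natDegree < D)
    (p : ℕ) (hp : p.Prime) (d : ℕ) (hd : 0 < d) (a : F)
    (ha : f.coeff d = a) (ha0 : a ≠ 0)
    (hnc : ∀ d' ∈ f.support, d' ≠ d → d' % p ≠ d % p) :
    (f %ₘ (X ^ p - 1)).coeff (d % p) = a ∧
    ((derivative f) %ₘ (X ^ p - 1)).coeff ((d - 1) % p) = a * (d : F) ∧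
    (d : F) = (a * (d : F)) / a ∧ d < D := by
  have hdD : d < D := lt_of_le_of_lt (le_natDegree_of_ne_zero (ha ▸ ha0)) hD
  refine ⟨?_, ?_, ?_, hdD⟩
  · rw [coeff_modByMonic_X_pow_sub_one p hp.pos f d hnc, ha]
  · have hnc' : ∀ i ∈ (derivative f).support, i ≠ d - 1 → i % p ≠ (d - 1) % p := by
      intro i hi hne heq
      have hi1 : i + 1 ∈ f.support := by
        rw [Polynomial.mem_support_iff] at hi ⊢
        intro h0
        apply hi
        rw [Polynomial.coeff_derivative, h0, zero_mul]
      have hne1 : i + 1 ≠ d := by intro h; apply hne; omega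
      apply hnc (i + 1) hi1 hne1
      have h2 : (i + 1) % p = ((d - 1) + 1) % p := by
        rw [Nat.add_mod, heq, ← Nat.add_mod]
      rw [h2, Nat.sub_add_cancel hd]
    rw [coeff_modByMonic_X_pow_sub_one p hp.pos (derivative f) (d - 1) hnc',
      Polynomial.coeff_derivative, Nat.sub_add_cancel hd, ha]
    obtain ⟨e, rfl⟩ : ∃ e, d = e + 1 := ⟨d - 1, by omega⟩
    push_cast
    ring
  · rw [mul_comm a, mul_div_assoc, div_self ha0, mul_one]
end

section
/- Let f = Σᵢ₌₁ᵗ cᵢmᵢ ∈ F[x₁,…,xₙ] over a field F with t ≤ T nonzero terms, and all partial degrees less than D. Let s = (1, D, D², …, D^{n−1}), let N₁ = max{1, ⌈n(T−1)·log₂ D⌉}, and let p₁,…,p_{4N₁} be 4N₁ distinct primes. Let j₀ ∈ [1, 4N₁] be such that f(x^s) mod (x^{p_{j₀}} − 1) has at least as many nonzero terms as f(x^s) mod (x^{p_j} − 1) for every j. Then at least ⌈t/2⌉ terms of f are not collisions in f(x^s) mod (x^{p_{j₀}} − 1). -/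
open scoped Classical
open Polynomial

/-- Kronecker-type substitution of a multivariate polynomial along exponent
weights `s`. -/
noncomputable def kronPoly {F : Type*} [CommRing F] {n : ℕ}
    (s : Fin n → ℕ) (f : MvPolynomial (Fin n) F) : Polynomial F :=
  ∑ a ∈ f.support, Polynomial.C (f.coeff a) * Polynomial.X ^ (∑ i, a i * s i)

/-- Number of nonzero terms of g mod (x^p - 1). -/
noncomputable def numTermsMod {F : Type*} [Field F] (g : Polynomial F) (p : ℕ) : ℕ :=
  (g %ₘ (Polynomial.X ^ p - 1)).support.card

/-! Two distinct exponents of the Kronecker image are distinct numbers below `D ^ n`, so they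
agree modulo fewer than `n log₂ D` of the primes. Averaging over the `4 N₁` primes, some prime
leaves at most `t/4` terms colliding, hence its reduction has at least `3t/4` terms, and so has
the reduction modulo the maximizing prime `p j₀`. Colliding terms merge in groups of at least two,
so at most `t/2` terms of `f` collide modulo `p j₀`. -/

open Finset

section Collisions

variable {ι κ β : Type*} [DecidableEq ι] [DecidableEq β]

def nonColliding (S : Finset ι) (φ : ι → β) : Finset ι :=
  S.filter fun a => ∀ a' ∈ S, a' ≠ a → φ a' ≠ φ a

theorem mem_nonColliding {S : Finset ι} {φ : ι → β} {a : ι} :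
    a ∈ nonColliding S φ ↔ a ∈ S ∧ ∀ a' ∈ S, a' ≠ a → φ a' ≠ φ a :=
  mem_filter

theorem nonColliding_subset (S : Finset ι) (φ : ι → β) : nonColliding S φ ⊆ S :=
  filter_subset _ _

theorem exists_collision_of_not_mem_nonColliding {S : Finset ι} {φ : ι → β} {a : ι}
    (ha : a ∈ S) (h : a ∉ nonColliding S φ) : ∃ a' ∈ S, a' ≠ a ∧ φ a' = φ a := by
  simpa [mem_nonColliding, ha] using h

theorem injOn_nonColliding (S : Finset ι) (φ : ι → β) : Set.InjOn φ (nonColliding S φ) := by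
  intro a ha b hb hab
  by_contra hne
  exact (mem_nonColliding.1 hb).2 a (mem_nonColliding.1 ha).1 hne hab

theorem filter_eq_singleton_of_mem_nonColliding {S : Finset ι} {φ : ι → β} {a : ι}
    (ha : a ∈ nonColliding S φ) : S.filter (φ · = φ a) = {a} := by
  obtain ⟨haS, huniq⟩ := mem_nonColliding.1 ha
  ext a'
  simp only [mem_filter, mem_singleton]
  exact ⟨fun ⟨ha', h⟩ => by_contra fun hne => huniq a' ha' hne h, by rintro rfl; exact ⟨haS, rfl⟩⟩

theorem nonColliding_eq_self_of_card_le_one {S : Finset ι} (hS : S.card ≤ 1) (φ : ι → β) :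
    nonColliding S φ = S :=
  filter_true_of_mem fun a ha a' ha' hne => absurd (card_le_one.1 hS a' ha' a ha) hne

/-- A value of `φ` on `S` is taken by a non-colliding element or by at least two elements. -/
theorem two_mul_card_image_le (S : Finset ι) (φ : ι → β) :
    2 * (S.image φ).card ≤ S.card + (nonColliding S φ).card := by
  have hfiber : ∀ b ∈ S.image φ,
      2 ≤ (S.filter (φ · = b)).card + ((nonColliding S φ).filter (φ · = b)).card := by
    intro b hb
    obtain ⟨a, ha, rfl⟩ := mem_image.1 hb
    by_cases h : a ∈ nonColliding S φ
    · have h₁ : 0 < (S.filter (φ · = φ a)).card := card_pos.2 ⟨a, mem_filter.2 ⟨ha, rfl⟩⟩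
      have h₂ : 0 < ((nonColliding S φ).filter (φ · = φ a)).card :=
        card_pos.2 ⟨a, mem_filter.2 ⟨h, rfl⟩⟩
      omega
    · obtain ⟨a', ha', hne, heq⟩ := exists_collision_of_not_mem_nonColliding ha h
      have : 1 < (S.filter (φ · = φ a)).card :=
        one_lt_card.2 ⟨a', mem_filter.2 ⟨ha', heq⟩, a, mem_filter.2 ⟨ha, rfl⟩, hne⟩
      omega
  calc 2 * (S.image φ).card = ∑ _b ∈ S.image φ, 2 := by rw [sum_const, smul_eq_mul, mul_comm]
    _ ≤ ∑ b ∈ S.image φ,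
          ((S.filter (φ · = b)).card + ((nonColliding S φ).filter (φ · = b)).card) :=
        sum_le_sum hfiber
    _ = S.card + (nonColliding S φ).card := by
      rw [sum_add_distrib, ← card_eq_sum_card_fiberwise fun a ha => mem_image_of_mem φ ha,
        ← card_eq_sum_card_fiberwise fun a ha =>
          mem_image_of_mem φ (nonColliding_subset S φ ha)]

theorem card_sdiff_nonColliding_le (S : Finset ι) (φ : ι → β) :
    (S \ nonColliding S φ).card ≤ (S.offDiag.filter fun x => φ x.1 = φ x.2).card := by
  refine card_le_card_of_surjOn Prod.snd fun a ha => ?_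
  obtain ⟨haS, hcol⟩ := mem_sdiff.1 ha
  obtain ⟨a', ha', hne, heq⟩ := exists_collision_of_not_mem_nonColliding haS hcol
  exact ⟨(a', a), by simp [ha', haS, hne, heq], rfl⟩

variable [Fintype κ]

theorem sum_card_sdiff_nonColliding_le (S : Finset ι) (φ : κ → ι → β) :
    ∑ j, (S \ nonColliding S (φ j)).card ≤ ∑ x ∈ S.offDiag, #{j | φ j x.1 = φ j x.2} :=
  calc ∑ j, (S \ nonColliding S (φ j)).card
      ≤ ∑ j, (S.offDiag.filter fun x => φ j x.1 = φ j x.2).card :=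
        sum_le_sum fun j _ => card_sdiff_nonColliding_le S (φ j)
    _ = ∑ x ∈ S.offDiag, #{j | φ j x.1 = φ j x.2} := by
        simp only [card_filter]
        exact sum_comm

theorem sum_card_sdiff_nonColliding_le_mul {S : Finset ι} {φ : κ → ι → β} {N : ℕ}
    (hpair : ∀ a ∈ S, ∀ b ∈ S, a ≠ b → (S.card - 1) * #{j | φ j a = φ j b} ≤ N) :
    ∑ j, (S \ nonColliding S (φ j)).card ≤ S.card * N := by
  rcases le_or_gt S.card 1 with hS | hS
  · simp [nonColliding_eq_self_of_card_le_one hS]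
  refine Nat.le_of_mul_le_mul_left ?_ (Nat.sub_pos_of_lt hS)
  calc (S.card - 1) * ∑ j, (S \ nonColliding S (φ j)).card
      ≤ ∑ x ∈ S.offDiag, (S.card - 1) * #{j | φ j x.1 = φ j x.2} := by
        rw [← mul_sum]
        exact Nat.mul_le_mul_left _ (sum_card_sdiff_nonColliding_le S φ)
    _ ≤ ∑ _x ∈ S.offDiag, N := sum_le_sum fun x hx => by
        obtain ⟨ha, hb, hab⟩ := mem_offDiag.1 hx
        exact hpair _ ha _ hb hab
    _ = (S.card - 1) * (S.card * N) := by
        rw [sum_const, offDiag_card, smul_eq_mul, ← Nat.mul_sub_one]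
        ring

theorem ceil_half_card_le_card_nonColliding {S : Finset ι} {φ : κ → ι → β} {m : κ → ℕ}
    {N : ℕ} (hκ : Fintype.card κ = 4 * N)
    (hpair : ∀ a ∈ S, ∀ b ∈ S, a ≠ b → (S.card - 1) * #{j | φ j a = φ j b} ≤ N)
    (hlow : ∀ j, (nonColliding S (φ j)).card ≤ m j)
    (hup : ∀ j, 2 * m j ≤ S.card + (nonColliding S (φ j)).card)
    {j₀ : κ} (hj₀ : ∀ j, m j ≤ m j₀) :
    (S.card + 1) / 2 ≤ (nonColliding S (φ j₀)).card := by
  obtain ⟨j₁, -, hj₁⟩ : ∃ j₁ ∈ univ, 4 * (S \ nonColliding S (φ j₁)).card ≤ S.card := by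
    refine exists_le_of_sum_le ⟨j₀, mem_univ _⟩ ?_
    calc ∑ j, 4 * (S \ nonColliding S (φ j)).card
        = 4 * ∑ j, (S \ nonColliding S (φ j)).card := (mul_sum _ _ _).symm
      _ ≤ 4 * (S.card * N) := Nat.mul_le_mul_left 4 (sum_card_sdiff_nonColliding_le_mul hpair)
      _ = ∑ _j : κ, S.card := by rw [sum_const, card_univ, hκ, smul_eq_mul]; ring
  rw [card_sdiff_of_subset (nonColliding_subset S _)] at hj₁
  have := card_le_card (nonColliding_subset S (φ j₁))
  have := hlow j₁
  have := hup j₀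
  have := hj₀ j₁
  omega

end Collisions

theorem two_pow_card_le_of_forall_prime_dvd {κ : Type*} {p : κ → ℕ} {J : Finset κ}
    (hp : ∀ j ∈ J, (p j).Prime) (hinj : Set.InjOn p J) {d : ℕ} (hd : d ≠ 0)
    (hdvd : ∀ j ∈ J, p j ∣ d) : 2 ^ J.card ≤ d := by
  classical
  calc 2 ^ J.card = 2 ^ (J.image p).card := by rw [card_image_of_injOn hinj]
    _ ≤ ∏ r ∈ J.image p, r :=
        pow_card_le_prod _ _ _ (forall_mem_image.2 fun j hj => (hp j hj).two_le)
    _ ≤ d := Nat.le_of_dvd (Nat.pos_of_ne_zero hd) <|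
        prod_primes_dvd d (forall_mem_image.2 fun j hj => (hp j hj).prime)
          (forall_mem_image.2 hdvd)

theorem two_pow_card_mod_eq_lt {κ : Type*} [Fintype κ] {p : κ → ℕ} (hp : ∀ j, (p j).Prime)
    (hinj : Function.Injective p) {a b M : ℕ} (hab : a ≠ b) (ha : a < M) (hb : b < M) :
    2 ^ #{j | a % p j = b % p j} < M := by
  have hdvd : ∀ j ∈ ({j | a % p j = b % p j} : Finset κ), p j ∣ ((b : ℤ) - a).natAbs :=
    fun j hj => Int.natCast_dvd.1 (Nat.ModEq.dvd (mem_filter.1 hj).2)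
  have := two_pow_card_le_of_forall_prime_dvd (fun j _ => hp j) hinj.injOn (by omega) hdvd
  omega

theorem mul_le_ceil_of_two_pow_lt {k t T n D : ℕ} (hk : 2 ^ k < D ^ n) (ht : t ≤ T) :
    (t - 1) * k ≤ ⌈((n : ℝ) * ((T : ℝ) - 1)) * Real.logb 2 D⌉₊ := by
  rcases Nat.eq_zero_or_pos t with rfl | ht₀
  · simp
  have hlog : (k : ℝ) < n * Real.logb 2 D := by
    have hk' : ((2 : ℝ) ^ k) < (D : ℝ) ^ n := by exact_mod_cast hk
    have := Real.logb_lt_logb one_lt_two (by positivity) hk'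
    rwa [Real.logb_pow, Real.logb_pow, Real.logb_self_eq_one one_lt_two, mul_one] at this
  have htT : ((t - 1 : ℕ) : ℝ) ≤ (T : ℝ) - 1 := by
    rw [Nat.cast_sub ht₀, Nat.cast_one]
    exact sub_le_sub_right (by exact_mod_cast ht) 1
  have hk₀ : (0 : ℝ) ≤ k := Nat.cast_nonneg k
  have hT₀ : (0 : ℝ) ≤ (T : ℝ) - 1 := (Nat.cast_nonneg _).trans htT
  refine Nat.cast_le.1 (le_trans ?_ (Nat.le_ceil _))
  push_cast
  nlinarith [mul_le_mul_of_nonneg_right htT hk₀, mul_le_mul_of_nonneg_left hlog.le hT₀]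

theorem sum_mul_pow_lt_pow {D n : ℕ} {a : Fin n → ℕ} (ha : ∀ i, a i < D) :
    ∑ i, a i * D ^ (i : ℕ) < D ^ n :=
  (finFunctionFinEquiv fun i => (⟨a i, ha i⟩ : Fin D)).isLt

theorem sum_mul_pow_injective {D n : ℕ} {a b : Fin n → ℕ} (ha : ∀ i, a i < D)
    (hb : ∀ i, b i < D) (h : ∑ i, a i * D ^ (i : ℕ) = ∑ i, b i * D ^ (i : ℕ)) : a = b := by
  have := finFunctionFinEquiv.injective
    (Fin.ext h : finFunctionFinEquiv (fun i => (⟨a i, ha i⟩ : Fin D)) =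
      finFunctionFinEquiv fun i => ⟨b i, hb i⟩)
  funext i
  exact congrArg Fin.val (congrFun this i)

section Reduction

theorem X_pow_modByMonic_X_pow_sub_one {R : Type*} [CommRing R] {q : ℕ} (hq : q ≠ 0) (e : ℕ) :
    (X ^ e : R[X]) %ₘ (X ^ q - 1) = X ^ (e % q) := by
  nontriviality R
  have hmonic : (X ^ q - 1 : R[X]).Monic := by simpa using monic_X_pow_sub_C (1 : R) hq
  have hdvd : (X ^ q - 1 : R[X]) ∣ X ^ e - X ^ (e % q) := by
    have he : (X : R[X]) ^ e = X ^ (e % q) * (X ^ q) ^ (e / q) := by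
      rw [← pow_mul, ← pow_add, Nat.mod_add_div]
    rw [he, ← mul_sub_one]
    exact dvd_mul_of_dvd_right (by simpa using sub_dvd_pow_sub_pow (X ^ q : R[X]) 1 (e / q)) _
  rw [modByMonic_eq_of_dvd_sub hmonic hdvd, (modByMonic_eq_self_iff hmonic).2]
  rw [degree_X_pow, show (X ^ q - 1 : R[X]) = X ^ q - C 1 by simp,
    degree_X_pow_sub_C (Nat.pos_of_ne_zero hq)]
  exact_mod_cast Nat.mod_lt e (Nat.pos_of_ne_zero hq)

theorem kronPoly_modByMonic {F : Type*} [CommRing F] {n q : ℕ} (s : Fin n → ℕ)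
    (f : MvPolynomial (Fin n) F) (hq : q ≠ 0) :
    kronPoly s f %ₘ (X ^ q - 1) =
      ∑ a ∈ f.support, C (f.coeff a) * X ^ ((∑ i, a i * s i) % q) := by
  rw [kronPoly, ← modByMonicHom_apply, map_sum]
  refine sum_congr rfl fun a _ => ?_
  rw [modByMonicHom_apply, C_mul', smul_modByMonic, X_pow_modByMonic_X_pow_sub_one hq, ← C_mul']

variable {R ι : Type*} [Semiring R]

theorem coeff_sum_C_mul_X_pow (S : Finset ι) (c : ι → R) (φ : ι → ℕ) (k : ℕ) :
    (∑ a ∈ S, C (c a) * X ^ φ a).coeff k = ∑ a ∈ S with φ a = k, c a := by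
  simp only [finsetSum_coeff, coeff_C_mul_X_pow, sum_filter, eq_comm]

theorem support_sum_C_mul_X_pow_subset [DecidableEq ι] (S : Finset ι) (c : ι → R)
    (φ : ι → ℕ) : (∑ a ∈ S, C (c a) * X ^ φ a).support ⊆ S.image φ := by
  intro k hk
  rw [mem_support_iff, coeff_sum_C_mul_X_pow] at hk
  obtain ⟨a, ha, -⟩ := exists_ne_zero_of_sum_ne_zero hk
  exact mem_image.2 ⟨a, (mem_filter.1 ha).1, (mem_filter.1 ha).2⟩

theorem card_nonColliding_le_card_support [DecidableEq ι] {S : Finset ι} {c : ι → R}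
    (hc : ∀ a ∈ S, c a ≠ 0) (φ : ι → ℕ) :
    (nonColliding S φ).card ≤ (∑ a ∈ S, C (c a) * X ^ φ a).support.card := by
  rw [← card_image_of_injOn (injOn_nonColliding S φ)]
  refine card_le_card fun k hk => ?_
  obtain ⟨a, ha, rfl⟩ := mem_image.1 hk
  rw [mem_support_iff, coeff_sum_C_mul_X_pow, filter_eq_singleton_of_mem_nonColliding ha,
    sum_singleton]
  exact hc a (nonColliding_subset S φ ha)

variable {F : Type*} [Field F] {n q : ℕ} (s : Fin n → ℕ) (f : MvPolynomial (Fin n) F)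

theorem card_nonColliding_le_numTermsMod (hq : q ≠ 0) :
    (nonColliding f.support fun a => (∑ i, a i * s i) % q).card ≤
      numTermsMod (kronPoly s f) q := by
  rw [numTermsMod, kronPoly_modByMonic s f hq]
  exact card_nonColliding_le_card_support (fun a ha => MvPolynomial.mem_support_iff.1 ha) _

theorem two_mul_numTermsMod_le (hq : q ≠ 0) :
    2 * numTermsMod (kronPoly s f) q ≤
      f.support.card + (nonColliding f.support fun a => (∑ i, a i * s i) % q).card := by
  rw [numTermsMod, kronPoly_modByMonic s f hq]
  exact (Nat.mul_le_mul_left 2 (card_le_card (support_sum_C_mul_X_pow_subset _ _ _))).trans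
    (two_mul_card_image_le _ _)

end Reduction

/-- the prime maximizing the number of terms of the reduced
Kronecker image leaves at least ⌈t/2⌉ terms of f non-colliding. -/
theorem stmt6 (F : Type*) [Field F] (n T D t : ℕ)
    (f : MvPolynomial (Fin n) F) (ht : f.support.card = t) (hT : t ≤ T)
    (hdeg : ∀ a ∈ f.support, ∀ i, a i < D)
    (N₁ : ℕ) (hN₁ : N₁ = max 1 ⌈((n : ℝ) * ((T : ℝ) - 1)) * Real.logb 2 D⌉₊)
    (s : Fin n → ℕ) (hs : ∀ i, s i = D ^ (i : ℕ))
    (p : Fin (4 * N₁) → ℕ) (hp : ∀ j, (p j).Prime) (hinj : Function.Injective p)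
    (j₀ : Fin (4 * N₁))
    (hj₀ : ∀ j, numTermsMod (kronPoly s f) (p j) ≤ numTermsMod (kronPoly s f) (p j₀)) :
    (t + 1) / 2 ≤ (f.support.filter (fun a => ∀ a' ∈ f.support, a' ≠ a →
        (∑ i, a' i * s i) % p j₀ ≠ (∑ i, a i * s i) % p j₀)).card := by
  obtain rfl : s = fun i : Fin n => D ^ (i : ℕ) := funext hs
  subst ht
  refine ceil_half_card_le_card_nonColliding (φ := fun j (a : Fin n →₀ ℕ) => (∑ i, a i * D ^ (i : ℕ)) % p j)
    (Fintype.card_fin _) ?_ (fun j => card_nonColliding_le_numTermsMod _ f (hp j).ne_zero)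
    (fun j => two_mul_numTermsMod_le _ f (hp j).ne_zero) hj₀
  intro a ha b hb hab
  have hcollide := two_pow_card_mod_eq_lt hp hinj
    (fun h => hab (DFunLike.coe_injective (sum_mul_pow_injective (hdeg a ha) (hdeg b hb) h)))
    (sum_mul_pow_lt_pow (hdeg a ha)) (sum_mul_pow_lt_pow (hdeg b hb))
  refine (mul_le_ceil_of_two_pow_lt hcollide hT).trans ?_
  rw [hN₁]
  exact le_max_right _ _
end

section
/- Let v₁,…,v_t be distinct nonzero elements of a field F and c₁,…,c_t nonzero elements of F. Define a_j = Σ_{k=1}^t c_k v_k^j for j ≥ 0, and let M_k be the k×k Hankel matrix (a_{i+j})_{0≤i,j<k}. Then det M_t ≠ 0, and det M_k = 0 for every k > t. -/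
open Matrix

/-- rank of Hankel matrices of power sums of a t-sparse sequence. -/
theorem stmt8 (F : Type*) [Field F] (t : ℕ) (v c : Fin t → F)
    (hv : Function.Injective v) (hv0 : ∀ k, v k ≠ 0) (hc : ∀ k, c k ≠ 0)
    (a : ℕ → F) (ha : ∀ j, a j = ∑ k, c k * v k ^ j) :
    (Matrix.of (fun i j : Fin t => a ((i : ℕ) + (j : ℕ)))).det ≠ 0 ∧
    ∀ k : ℕ, t < k →
      (Matrix.of (fun i j : Fin k => a ((i : ℕ) + (j : ℕ)))).det = 0 := by
  constructor
  · have hM : (Matrix.of (fun i j : Fin t => a ((i : ℕ) + (j : ℕ))))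
        = (Matrix.vandermonde v)ᵀ * Matrix.diagonal c * Matrix.vandermonde v := by
      ext i j
      simp [Matrix.mul_apply, Matrix.vandermonde, Matrix.diagonal, ha, pow_add,
        Finset.sum_mul]
      exact Finset.sum_congr rfl fun x _ => by ring
    rw [hM, Matrix.det_mul, Matrix.det_mul, Matrix.det_transpose, Matrix.det_diagonal]
    have hvd : (Matrix.vandermonde v).det ≠ 0 :=
      Matrix.det_vandermonde_ne_zero_iff.mpr hv
    exact mul_ne_zero (mul_ne_zero hvd (Finset.prod_ne_zero_iff.mpr fun k _ => hc k)) hvd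
  · intro k hk
    set M : Matrix (Fin k) (Fin k) F := Matrix.of (fun i j : Fin k => a ((i : ℕ) + (j : ℕ)))
    have hM : M = (Matrix.of fun (i : Fin k) (l : Fin t) => c l * v l ^ (i : ℕ)) *
        (Matrix.of fun (l : Fin t) (j : Fin k) => v l ^ (j : ℕ)) := by
      ext i j
      simp [M, Matrix.mul_apply, ha, pow_add, mul_assoc]
    by_contra hdet
    have hU : IsUnit M := (Matrix.isUnit_iff_isUnit_det M).mpr (isUnit_iff_ne_zero.mpr hdet)
    have hr : M.rank = k := by
      rw [Matrix.rank_of_isUnit M hU, Fintype.card_fin]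
    have hle : M.rank ≤ t := by
      rw [hM]
      exact (Matrix.rank_mul_le_right _ _).trans
        ((Matrix.rank_le_card_height _).trans (Fintype.card_fin t).le)
    omega
end

section
/- Let f = Σ_{k=1}^t c_k X^{e_k} ∈ F_q[x₁,…,xₙ] with char(F_q) > max_k,i e_{k,i}, distinct exponent vectors e_k, and nonzero c_k. Suppose α ∈ (F_q*)ⁿ is a good point of f, i.e. the values v_k = α^{e_k} are pairwise distinct. Then f is uniquely determined by the 2t evaluations f(α^{(j)}) for j = 0,…,2t−1 together with the n·t evaluations (x_i ∂f/∂x_i)(α^{(j)}) for i = 1,…,n and j = 0,…,t−1: the c_k and v_k are recovered from Prony's method, and each integer exponent e_{k,i} equals the unique natural number less than char(F_q) whose image in F_q is (Σ-component) (c_k e_{k,i})/c_k. -/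
/-!
At the points `α^{(j)}` the polynomial `f` evaluates to the exponential sum `∑ₖ cₖ vₖ^j` with
nodes `vₖ = α^{eₖ}`, and `xᵢ ∂f/∂xᵢ` to `∑ₖ cₖ eₖᵢ vₖ^j`. By Vandermonde, an exponential sum
over at most `N` distinct nodes that vanishes for `j < N` has zero coefficient at every node.
Applied to the at most `t + t' ≤ 2t` nodes of `f` and `g`, this matches the terms of `f` and `g`
by a bijection `σ` preserving nodes and coefficients. Applied to the derivative data on the `t`
distinct nodes of `f`, it gives `cₖ eₖᵢ = cₖ e'_{σ(k),i}` in `F`; since the exponents lie below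
the characteristic, this equality of residues is an equality of natural numbers.
-/

open Function MvPolynomial

theorem Function.Injective.sum_extend_mul {ι α β : Type*} [Fintype ι] [DecidableEq α]
    [NonUnitalNonAssocSemiring β] {v : ι → α} (hv : Injective v) (c : ι → β) (h : α → β)
    {s : Finset α} (hs : ∀ i, v i ∈ s) :
    ∑ a ∈ s, extend v c 0 a * h a = ∑ i, c i * h (v i) := by
  rw [← Finset.sum_subset (s₁ := Finset.univ.image v) (by simpa [Finset.subset_iff] using hs),
    Finset.sum_image hv.injOn]
  · simp only [hv.extend_apply]
  · intro a _ ha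
    rw [extend_apply' _ _ _ (by simpa using ha), Pi.zero_apply, zero_mul]

section ExponentialSums

variable {R : Type*} [CommRing R] [IsDomain R] {ι ι' : Type*} [Fintype ι] [Fintype ι']

theorem Function.Injective.eq_of_forall_sum_mul_pow_eq {v : ι → R} (hv : Injective v)
    {d d' : ι → R} (h : ∀ j < Fintype.card ι, ∑ i, d i * v i ^ j = ∑ i, d' i * v i ^ j) :
    d = d' := by
  let π := (Fintype.equivFin ι).symm
  have hzero : (fun k => d (π k) - d' (π k)) = 0 :=
    Matrix.eq_zero_of_forall_pow_sum_mul_pow_eq_zero (f := v ∘ π) (hv.comp π.injective)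
      fun j => by
        simp only [comp_apply, sub_mul, Finset.sum_sub_distrib, Equiv.sum_comp π
          (fun i => d i * v i ^ (j : ℕ)), Equiv.sum_comp π (fun i => d' i * v i ^ (j : ℕ)),
          h j j.isLt, sub_self]
  funext i
  simpa [π, sub_eq_zero] using congrFun hzero (Fintype.equivFin ι i)

theorem exists_equiv_of_forall_sum_mul_pow_eq {v : ι → R} {w : ι' → R} (hv : Injective v)
    (hw : Injective w) {c : ι → R} {c' : ι' → R} (hc : ∀ i, c i ≠ 0) (hc' : ∀ i, c' i ≠ 0)
    (h : ∀ j < Fintype.card ι + Fintype.card ι',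
      ∑ i, c i * v i ^ j = ∑ i, c' i * w i ^ j) :
    ∃ σ : ι ≃ ι', (∀ i, w (σ i) = v i) ∧ ∀ i, c' (σ i) = c i := by
  classical
  set s := Finset.univ.image v ∪ Finset.univ.image w
  have hvs : ∀ i, v i ∈ s := fun i => by simp [s]
  have hws : ∀ i, w i ∈ s := fun i => by simp [s]
  have hcoeff : ∀ a ∈ s, extend v c 0 a = extend w c' 0 a := by
    have := (Subtype.val_injective (p := (· ∈ s))).eq_of_forall_sum_mul_pow_eq
      (d := fun a => extend v c 0 a) (d' := fun a => extend w c' 0 a) fun j hj => by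
        have hcard : s.card ≤ Fintype.card ι + Fintype.card ι' :=
          (Finset.card_union_le _ _).trans (add_le_add Finset.card_image_le Finset.card_image_le)
        rw [Finset.sum_coe_sort s (fun a => extend v c 0 a * a ^ j),
          Finset.sum_coe_sort s (fun a => extend w c' 0 a * a ^ j), hv.sum_extend_mul c _ hvs,
          hw.sum_extend_mul c' _ hws]
        exact h j (by rw [Fintype.card_coe] at hj; omega)
    exact fun a ha => congrFun this ⟨a, ha⟩
  have hrange : Set.range v = Set.range w := by
    apply Set.Subset.antisymm
    · rintro _ ⟨i, rfl⟩
      by_contra hi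
      exact hc i (by rw [← hv.extend_apply c 0 i, hcoeff _ (hvs i), extend_apply' _ _ _ hi,
        Pi.zero_apply])
    · rintro _ ⟨i, rfl⟩
      by_contra hi
      exact hc' i (by rw [← hw.extend_apply c' 0 i, ← hcoeff _ (hws i), extend_apply' _ _ _ hi,
        Pi.zero_apply])
  let σ : ι ≃ ι' :=
    (Equiv.ofInjective v hv).trans ((Equiv.setCongr hrange).trans (Equiv.ofInjective w hw).symm)
  have hσ : ∀ i, w (σ i) = v i := fun i => Equiv.apply_ofInjective_symm hw _
  refine ⟨σ, hσ, fun i => ?_⟩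
  rw [← hw.extend_apply c' 0, hσ, ← hcoeff _ (hvs i), hv.extend_apply]

theorem comp_equiv_eq_of_forall_sum_mul_pow_eq {v : ι → R} {w : ι' → R} (hv : Injective v)
    (σ : ι ≃ ι') (hσ : ∀ i, w (σ i) = v i) {d : ι → R} {d' : ι' → R}
    (h : ∀ j < Fintype.card ι, ∑ i, d i * v i ^ j = ∑ i, d' i * w i ^ j) :
    d' ∘ σ = d := by
  refine (hv.eq_of_forall_sum_mul_pow_eq fun j hj => ?_).symm
  rw [h j hj, ← Equiv.sum_comp σ]
  simp only [comp_apply, hσ]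

end ExponentialSums

namespace MvPolynomial

variable {R σ : Type*} [CommSemiring R] [Fintype σ]

theorem eval_pow_monomial (x : σ → R) (j : ℕ) (m : σ →₀ ℕ) (a : R) :
    eval (fun l => x l ^ j) (monomial m a) = a * (∏ l, x l ^ m l) ^ j := by
  rw [eval_monomial, Finsupp.prod_fintype _ _ fun _ => pow_zero _, ← Finset.prod_pow]
  simp only [← pow_mul, mul_comm]

theorem eval_pow_X_mul_pderiv_monomial (x : σ → R) (j : ℕ) (i : σ) (m : σ →₀ ℕ) (a : R) :
    eval (fun l => x l ^ j) (X i * pderiv i (monomial m a)) = a * m i * (∏ l, x l ^ m l) ^ j := by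
  rw [X_mul_pderiv_monomial, smul_monomial, eval_pow_monomial, nsmul_eq_mul, mul_comm a]

end MvPolynomial

theorem stmt11_general (F : Type*) [Field F] (n t t' : ℕ) (ht' : t' ≤ t)
    (c : Fin t → F) (c' : Fin t' → F) (hc : ∀ k, c k ≠ 0) (hc' : ∀ k, c' k ≠ 0)
    (e : Fin t → (Fin n →₀ ℕ)) (e' : Fin t' → (Fin n →₀ ℕ))
    (hdeg : ∀ k i, e k i < ringChar F) (hdeg' : ∀ k i, e' k i < ringChar F)
    (f g : MvPolynomial (Fin n) F)
    (hf : f = ∑ k, MvPolynomial.monomial (e k) (c k))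
    (hg : g = ∑ k, MvPolynomial.monomial (e' k) (c' k))
    (α : Fin n → Fˣ)
    (hgood : Function.Injective fun k : Fin t => ∏ l, (α l : F) ^ e k l)
    (hgood' : Function.Injective fun k : Fin t' => ∏ l, (α l : F) ^ e' k l)
    (heval : ∀ j < 2 * t, MvPolynomial.eval (fun l => (α l : F) ^ j) f
        = MvPolynomial.eval (fun l => (α l : F) ^ j) g)
    (hder : ∀ i : Fin n, ∀ j < t,
        MvPolynomial.eval (fun l => (α l : F) ^ j)
            (MvPolynomial.X i * MvPolynomial.pderiv i f)
      = MvPolynomial.eval (fun l => (α l : F) ^ j)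
            (MvPolynomial.X i * MvPolynomial.pderiv i g)) :
    f = g := by
  subst hf hg
  simp only [map_sum, Finset.mul_sum, eval_pow_monomial, eval_pow_X_mul_pderiv_monomial]
    at heval hder
  obtain ⟨σ, hσv, hσc⟩ := exists_equiv_of_forall_sum_mul_pow_eq hgood hgood' hc hc'
    fun j hj => heval j (by rw [Fintype.card_fin, Fintype.card_fin] at hj; omega)
  have hσe : ∀ k, e' (σ k) = e k := fun k => Finsupp.ext fun i => by
    have hcoeff := congrFun (comp_equiv_eq_of_forall_sum_mul_pow_eq hgood σ hσv
      (d := fun k => c k * e k i) (d' := fun k => c' k * e' k i)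
      fun j hj => hder i j (by simpa using hj)) k
    simp only [comp_apply, hσc, mul_right_inj' (hc k)] at hcoeff
    exact CharP.natCast_injOn_Iio F (ringChar F) (hdeg' _ i) (hdeg k i) hcoeff
  rw [← Equiv.sum_comp σ]
  simp only [hσe, hσc]

/-- a sparse polynomial with a good point and partial degrees
below the characteristic is uniquely determined by the evaluations
f(α^{(j)}), j < 2t, and (x_i ∂f/∂x_i)(α^{(j)}), j < t. -/
theorem stmt11 (F : Type*) [Field F] [Fintype F] (n t t' : ℕ) (ht' : t' ≤ t)
    (c : Fin t → F) (c' : Fin t' → F) (hc : ∀ k, c k ≠ 0) (hc' : ∀ k, c' k ≠ 0)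
    (e : Fin t → (Fin n →₀ ℕ)) (e' : Fin t' → (Fin n →₀ ℕ))
    (he : Function.Injective e) (he' : Function.Injective e')
    (hdeg : ∀ k i, e k i < ringChar F) (hdeg' : ∀ k i, e' k i < ringChar F)
    (f g : MvPolynomial (Fin n) F)
    (hf : f = ∑ k, MvPolynomial.monomial (e k) (c k))
    (hg : g = ∑ k, MvPolynomial.monomial (e' k) (c' k))
    (α : Fin n → Fˣ)
    (hgood : Function.Injective fun k : Fin t => ∏ l, (α l : F) ^ e k l)
    (hgood' : Function.Injective fun k : Fin t' => ∏ l, (α l : F) ^ e' k l)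
    (heval : ∀ j < 2 * t, MvPolynomial.eval (fun l => (α l : F) ^ j) f
        = MvPolynomial.eval (fun l => (α l : F) ^ j) g)
    (hder : ∀ i : Fin n, ∀ j < t,
        MvPolynomial.eval (fun l => (α l : F) ^ j)
            (MvPolynomial.X i * MvPolynomial.pderiv i f)
      = MvPolynomial.eval (fun l => (α l : F) ^ j)
            (MvPolynomial.X i * MvPolynomial.pderiv i g)) :
    f = g :=
  stmt11_general F n t t' ht' c c' hc hc' e e' hdeg hdeg' f g hf hg α hgood hgood' heval hder
end

section
/- Let f ∈ F[x] have t ≤ T nonzero terms with degree less than D, and suppose t ≥ 2. For a prime p, say p 'separates' an ordered pair of distinct exponents (dᵢ, dⱼ) of f if dᵢ ≢ dⱼ (mod p). Each nonzero integer dᵢ − dⱼ with |dᵢ − dⱼ| < D has at most log₂ D distinct prime divisors. Consequently, among any N ≥ 4·⌈(T−1)·log₂ D⌉ distinct primes, at least one prime p has the property that at least ⌈t/2⌉ terms of f are not collisions modulo p. -/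
open scoped Classical
open Polynomial

/-!
Two exponents `a ≠ b` collide modulo a prime `p` only if `p ∣ a - b`, and `0 < |a - b| < D` has at
most `log₂ D` prime factors, since their product divides it. Double counting the pairs
`(prime, colliding ordered pair)` bounds the total number of collisions over the `N` primes by
`t (t - 1) log₂ D`, so some prime has at most `t (t - 1) log₂ D / N ≤ t / 4` colliding terms, leaving
`3t/4 ≥ ⌈t/2⌉` terms isolated when `t ≥ 2`.
-/

open Finset

namespace Nat

theorem two_pow_card_primeFactors_le {m : ℕ} (hm : m ≠ 0) : 2 ^ #m.primeFactors ≤ m :=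
  calc 2 ^ #m.primeFactors ≤ ∏ p ∈ m.primeFactors, p :=
        pow_card_le_prod _ _ _ fun _ hp => (prime_of_mem_primeFactors hp).two_le
    _ ≤ m := le_of_dvd (pos_of_ne_zero hm) (prod_primeFactors_dvd m)

theorem card_primeFactors_le_logb {m D : ℕ} (hm : m ≠ 0) (hmD : m ≤ D) :
    (#m.primeFactors : ℝ) ≤ Real.logb 2 D := by
  rw [Real.le_logb_iff_rpow_le one_lt_two (by norm_cast; omega), Real.rpow_natCast]
  exact_mod_cast (two_pow_card_primeFactors_le hm).trans hmD

end Nat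

theorem filter_mod_eq_subset_primeFactors {P : Finset ℕ} (hP : ∀ p ∈ P, p.Prime) {a b : ℕ}
    (hab : a ≠ b) : {p ∈ P | a % p = b % p} ⊆ ((a : ℤ) - b).natAbs.primeFactors := by
  intro p hp
  obtain ⟨hpP, hmod⟩ := mem_filter.mp hp
  have hdvd : (p : ℤ) ∣ (a : ℤ) - b := Nat.modEq_iff_dvd.mp hmod.symm
  exact Nat.mem_primeFactors.mpr ⟨hP p hpP, Int.natCast_dvd.mp hdvd, by omega⟩

theorem Finset.exists_card_mul_le_sum {ι : Type*} {P : Finset ι} (hP : P.Nonempty) (g : ι → ℕ) :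
    ∃ p ∈ P, #P * g p ≤ ∑ q ∈ P, g q :=
  exists_le_of_sum_le hP <| by rw [← mul_sum, sum_const, smul_eq_mul]

section Collisions

variable (S : Finset ℕ) (p : ℕ)

def collidingPairs : Finset (ℕ × ℕ) := {q ∈ S.offDiag | q.1 % p = q.2 % p}

def isolated : Finset ℕ := {d ∈ S | ∀ d' ∈ S, d' ≠ d → d' % p ≠ d % p}

theorem card_le_card_isolated_add_card_collidingPairs :
    #S ≤ #(isolated S p) + #(collidingPairs S p) := by
  have hcover : S ⊆ isolated S p ∪ (collidingPairs S p).image Prod.fst := by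
    intro d hd
    by_cases hiso : ∀ d' ∈ S, d' ≠ d → d' % p ≠ d % p
    · exact mem_union_left _ (mem_filter.mpr ⟨hd, hiso⟩)
    · push Not at hiso
      obtain ⟨d', hd', hne, hmod⟩ := hiso
      refine mem_union_right _ (mem_image.mpr ⟨(d, d'), ?_, rfl⟩)
      exact mem_filter.mpr ⟨mem_offDiag.mpr ⟨hd, hd', hne.symm⟩, hmod.symm⟩
  calc #S ≤ #(isolated S p ∪ (collidingPairs S p).image Prod.fst) := card_le_card hcover
    _ ≤ _ := (card_union_le _ _).trans (Nat.add_le_add_left card_image_le _)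

variable {S} {P : Finset ℕ}

theorem sum_card_collidingPairs_eq :
    ∑ p ∈ P, #(collidingPairs S p) = ∑ q ∈ S.offDiag, #{p ∈ P | q.1 % p = q.2 % p} := by
  simp_rw [collidingPairs, card_filter]
  exact sum_comm

theorem sum_card_collidingPairs_le (hP : ∀ p ∈ P, p.Prime) {L : ℝ}
    (hL : ∀ a ∈ S, ∀ b ∈ S, a ≠ b → (#((a : ℤ) - b).natAbs.primeFactors : ℝ) ≤ L) :
    (∑ p ∈ P, #(collidingPairs S p) : ℝ) ≤ #S.offDiag * L := by
  rw [← Nat.cast_sum, sum_card_collidingPairs_eq, Nat.cast_sum, ← nsmul_eq_mul, ← sum_const]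
  refine sum_le_sum fun q hq => ?_
  obtain ⟨ha, hb, hab⟩ := mem_offDiag.mp hq
  exact le_trans (by exact_mod_cast card_le_card (filter_mod_eq_subset_primeFactors hP hab))
    (hL _ ha _ hb hab)

theorem exists_four_mul_card_collidingPairs_le (hP : ∀ p ∈ P, p.Prime) {L : ℝ}
    (hL : ∀ a ∈ S, ∀ b ∈ S, a ≠ b → (#((a : ℤ) - b).natAbs.primeFactors : ℝ) ≤ L)
    (hpos : 0 < ((#S : ℝ) - 1) * L) (hN : 4 * (((#S : ℝ) - 1) * L) ≤ #P) :
    ∃ p ∈ P, 4 * #(collidingPairs S p) ≤ #S := by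
  have hPne : P.Nonempty := card_pos.mp <| (Nat.cast_pos (α := ℝ)).mp (by linarith)
  obtain ⟨p, hp, hmin⟩ := exists_card_mul_le_sum hPne fun p => #(collidingPairs S p)
  refine ⟨p, hp, Nat.cast_le.mp <| le_of_mul_le_mul_left ?_ hpos⟩
  have hoff : (#S.offDiag : ℝ) = #S * (#S - 1) := by
    rw [offDiag_card, Nat.cast_sub (Nat.le_mul_self _)]; push_cast; ring
  calc ((#S : ℝ) - 1) * L * ↑(4 * #(collidingPairs S p))
      = 4 * (((#S : ℝ) - 1) * L) * #(collidingPairs S p) := by push_cast; ring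
    _ ≤ (#P * #(collidingPairs S p) : ℕ) := by push_cast; gcongr
    _ ≤ (∑ q ∈ P, #(collidingPairs S q) : ℕ) := by exact_mod_cast hmin
    _ ≤ #S * (#S - 1) * L := by rw [← hoff]; exact_mod_cast sum_card_collidingPairs_le hP hL
    _ = ((#S : ℝ) - 1) * L * #S := by ring

end Collisions

/-- exponent differences have few prime divisors, hence among
enough distinct primes some prime leaves at least half the terms of f
non-colliding. -/
theorem stmt14 (F : Type*) [Field F] (T D t : ℕ) (f : Polynomial F)
    (ht : f.support.card = t) (hT : t ≤ T) (ht2 : 2 ≤ t) (hdeg : f.natDegree < D)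
    (P : Finset ℕ) (hP : ∀ p ∈ P, p.Prime)
    (hN : 4 * ⌈((T : ℝ) - 1) * Real.logb 2 D⌉₊ ≤ P.card) :
    (∀ d ∈ f.support, ∀ d' ∈ f.support, d ≠ d' →
      ((((d : ℤ) - (d' : ℤ)).natAbs.primeFactors.card : ℝ) ≤ Real.logb 2 D)) ∧
    ∃ p ∈ P, (t + 1) / 2 ≤ (f.support.filter fun d =>
        ∀ d' ∈ f.support, d' ≠ d → d' % p ≠ d % p).card := by
  subst ht
  have hlt : ∀ d ∈ f.support, d < D := fun d hd => (le_natDegree_of_mem_supp d hd).trans_lt hdeg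
  have hfew : ∀ d ∈ f.support, ∀ d' ∈ f.support, d ≠ d' →
      (#((d : ℤ) - d').natAbs.primeFactors : ℝ) ≤ Real.logb 2 D := fun d hd d' hd' hne =>
    Nat.card_primeFactors_le_logb (by omega) (by have := hlt d hd; have := hlt d' hd'; omega)
  refine ⟨hfew, ?_⟩
  obtain ⟨a, ha, b, hb, hab⟩ := one_lt_card.mp ht2
  have hL : 0 < Real.logb 2 D :=
    Real.logb_pos one_lt_two (by have := hlt a ha; have := hlt b hb; norm_cast; omega)
  have hpos : 0 < ((#f.support : ℝ) - 1) * Real.logb 2 D := by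
    have : (2 : ℝ) ≤ #f.support := by exact_mod_cast ht2
    nlinarith
  have hNL : 4 * (((#f.support : ℝ) - 1) * Real.logb 2 D) ≤ #P :=
    calc _ ≤ 4 * (((T : ℝ) - 1) * Real.logb 2 D) := by gcongr
      _ ≤ 4 * (⌈((T : ℝ) - 1) * Real.logb 2 D⌉₊ : ℝ) := by gcongr; exact Nat.le_ceil _
      _ ≤ #P := by exact_mod_cast hN
  obtain ⟨p, hp, hquarter⟩ := exists_four_mul_card_collidingPairs_le hP hfew hpos hNL
  have hcover := card_le_card_isolated_add_card_collidingPairs f.support p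
  exact ⟨p, hp, show _ ≤ #(isolated f.support p) by omega⟩
end

section
/- Let f ∈ F_q[x] with char(F_q) > deg f and let p be a prime. If every term of f is a non-collision in f mod (x^p − 1), then f is completely determined by the pair (f mod (x^p − 1), f' mod (x^p − 1)): for each nonzero term c·x^e of f mod (x^p − 1) with e > 0, the corresponding term of f is c·x^d where d ∈ ℕ is the lift of h/c to [0, deg f], h being the coefficient of x^{e−1} in f' mod (x^p − 1). -/
open Polynomial

section Aux
open Finset
variable {F : Type*} [Field F]

variable {F : Type*} [Field F]

lemma coeff_modX (f : Polynomial F) (p : ℕ) (hp : 0 < p) (e : ℕ) :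
    (f %ₘ (X ^ p - 1)).coeff e
      = ∑ d ∈ f.support.filter (fun d => d % p = e), f.coeff d := by
  have hmon : (X ^ p - 1 : Polynomial F).Monic := by
    simpa using monic_X_pow_sub_C (1 : F) hp.ne'
  set r : Polynomial F := ∑ d ∈ f.support, C (f.coeff d) * X ^ (d % p) with hr
  have hdvd : (X ^ p - 1 : Polynomial F) ∣ f - r := by
    have hf : f = ∑ d ∈ f.support, C (f.coeff d) * X ^ d := by
      conv_lhs => rw [f.as_sum_support]
      simp [C_mul_X_pow_eq_monomial]
    rw [hf, hr, ← Finset.sum_sub_distrib]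
    apply Finset.dvd_sum
    intro d _
    rw [← mul_sub]
    apply Dvd.dvd.mul_left
    have : (X : Polynomial F) ^ d - X ^ (d % p)
        = X ^ (d % p) * ((X ^ p) ^ (d / p) - 1 ^ (d / p)) := by
      rw [mul_sub, ← pow_mul, ← pow_add, one_pow, mul_one]
      rw [Nat.add_comm, Nat.div_add_mod]
    rw [this]
    exact Dvd.dvd.mul_left (sub_dvd_pow_sub_pow _ _ _) _
  have hdegXp : (X ^ p - 1 : Polynomial F).degree = p := by
    rw [show (X:Polynomial F)^p - 1 = X^p - C 1 by simp, degree_X_pow_sub_C hp]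
  have hdeg : r.degree < (X ^ p - 1 : Polynomial F).degree := by
    rw [hdegXp]
    apply lt_of_le_of_lt (degree_sum_le _ _)
    refine (Finset.sup_lt_iff (by exact_mod_cast WithBot.bot_lt_coe p)).2 ?_
    intro d _
    refine lt_of_le_of_lt (degree_C_mul_X_pow_le _ _) ?_
    exact_mod_cast Nat.mod_lt d hp
  have : f %ₘ (X ^ p - 1) = r := by
    rw [modByMonic_eq_of_dvd_sub hmon hdvd, (modByMonic_eq_self_iff hmon).2 hdeg]
  rw [this, hr, finset_sum_coeff]
  rw [Finset.sum_filter]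
  apply Finset.sum_congr rfl
  intro d _
  rw [coeff_C_mul, coeff_X_pow]
  by_cases h : d % p = e <;> simp [h]
  exact fun he => absurd he.symm h

end Aux

/-- if every term of f is a non-collision mod (x^p - 1), then f
is completely determined by f mod (x^p-1) and f' mod (x^p-1). -/
theorem stmt16 (F : Type*) [Field F] [Fintype F] (f : Polynomial F)
    (hchar : f.natDegree < ringChar F) (p : ℕ) (hp : p.Prime)
    (hnc : ∀ d ∈ f.support, ∀ d' ∈ f.support, d' ≠ d → d' % p ≠ d % p) :
    ∀ e ∈ (f %ₘ (X ^ p - 1)).support, 0 < e →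
      ∃ d ∈ f.support, d % p = e ∧
        f.coeff d = (f %ₘ (X ^ p - 1)).coeff e ∧
        (d : F) = ((derivative f %ₘ (X ^ p - 1)).coeff (e - 1)) /
          ((f %ₘ (X ^ p - 1)).coeff e) ∧
        d ≤ f.natDegree := by
  intro e he he0
  have hp0 : 0 < p := hp.pos
  have hmon : (X ^ p - 1 : Polynomial F).Monic := by
    simpa using monic_X_pow_sub_C (1 : F) hp0.ne'
  -- e < p
  have hep : e < p := by
    have h1 := Polynomial.degree_modByMonic_lt f hmon
    have h2 : (e : WithBot ℕ) ≤ (f %ₘ (X ^ p - 1)).degree := le_degree_of_ne_zero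
      (mem_support_iff.1 he)
    have hdegXp : (X ^ p - 1 : Polynomial F).degree = p := by
      rw [show (X:Polynomial F)^p - 1 = X^p - C 1 by simp, degree_X_pow_sub_C hp0]
    rw [hdegXp] at h1
    exact_mod_cast lt_of_le_of_lt h2 h1
  have hce : (f %ₘ (X ^ p - 1)).coeff e ≠ 0 := mem_support_iff.1 he
  rw [coeff_modX f p hp0 e] at hce ⊢
  -- the filter set is nonempty
  obtain ⟨d, hd⟩ : ∃ d, d ∈ f.support.filter (fun d => d % p = e) := by
    by_contra h
    push_neg at h
    exact hce (Finset.sum_eq_zero (fun x hx => absurd hx (h x)))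
  have hdsup : d ∈ f.support := (Finset.mem_filter.1 hd).1
  have hdmod : d % p = e := (Finset.mem_filter.1 hd).2
  have hsingle : f.support.filter (fun d => d % p = e) = {d} := by
    apply Finset.eq_singleton_iff_unique_mem.2
    refine ⟨hd, fun x hx => ?_⟩
    by_contra hne
    exact hnc d hdsup x (Finset.mem_filter.1 hx).1 hne
      ((Finset.mem_filter.1 hx).2.trans hdmod.symm)
  have hsum : ∑ x ∈ f.support.filter (fun d => d % p = e), f.coeff x = f.coeff d := by
    rw [hsingle, Finset.sum_singleton]
  have hc : f.coeff d ≠ 0 := by rwa [hsum] at hce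
  have hd0 : 0 < d := by
    rcases Nat.eq_zero_or_pos d with h | h
    · subst h; simp at hdmod; omega
    · exact h
  -- derivative part
  have hder : (derivative f %ₘ (X ^ p - 1)).coeff (e - 1) = (d : F) * f.coeff d := by
    rw [coeff_modX (derivative f) p hp0 (e - 1)]
    have hsub : (derivative f).support.filter (fun d' => d' % p = e - 1) ⊆ {d - 1} := by
      intro d' hd'
      obtain ⟨hd's, hd'm⟩ := Finset.mem_filter.1 hd'
      have hcoeff : f.coeff (d' + 1) ≠ 0 := by
        intro h0
        have := coeff_derivative f d'
        rw [h0, zero_mul] at this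
        exact mem_support_iff.1 hd's this
      have h1 : (d' + 1) % p = e := by
        rw [Nat.add_mod, hd'm, Nat.one_mod_eq_one.2 (by omega),
          show e - 1 + 1 = e by omega, Nat.mod_eq_of_lt hep]
      have : d' + 1 ∈ f.support.filter (fun d => d % p = e) :=
        Finset.mem_filter.2 ⟨mem_support_iff.2 hcoeff, h1⟩
      rw [hsingle, Finset.mem_singleton] at this
      simp [Finset.mem_singleton]
      omega
    have hdm1 : (d - 1) % p = e - 1 := by
      have h := Nat.div_add_mod d p
      rw [hdmod] at h
      have h2 : d - 1 = p * (d / p) + (e - 1) := by omega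
      rw [h2, Nat.mul_add_mod, Nat.mod_eq_of_lt (by omega)]
    have key : ∑ x ∈ (derivative f).support.filter (fun d' => d' % p = e - 1),
        (derivative f).coeff x = (derivative f).coeff (d - 1) := by
      by_cases hmem : d - 1 ∈ (derivative f).support.filter (fun d' => d' % p = e - 1)
      · rw [Finset.eq_singleton_iff_unique_mem.2 ⟨hmem, fun x hx => Finset.mem_singleton.1
          (hsub hx)⟩, Finset.sum_singleton]
      · have h1 : (derivative f).support.filter (fun d' => d' % p = e - 1) = ∅ := by
          apply Finset.eq_empty_of_forall_notMem
          intro x hx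
          have := Finset.mem_singleton.1 (hsub hx)
          subst this
          exact hmem hx
        have h2 : (derivative f).coeff (d - 1) = 0 := by
          by_contra h3
          exact hmem (Finset.mem_filter.2 ⟨mem_support_iff.2 h3, hdm1⟩)
        rw [h1, h2, Finset.sum_empty]
    rw [key, coeff_derivative]
    have : d - 1 + 1 = d := by omega
    rw [this]
    rw [Nat.cast_sub hd0]
    ring
  refine ⟨d, hdsup, hdmod, hsum.symm, ?_, le_natDegree_of_ne_zero hc⟩
  rw [hder, hsum, mul_div_assoc, div_self hc, mul_one]
end

section
/- Let f, f* ∈ F_q[x₁,…,xₙ] each have at most T nonzero terms and partial degrees < D, and suppose f ≠ f*. Let s = (1, D, …, D^{n−1}) and let p₁,…,p_N be distinct primes with N = max{1, ⌈2n(2T−1)·log₂ D⌉} (enough primes). Then there exists j such that f(x^s) ≢ f*(x^s) (mod x^{p_j} − 1); i.e., the images modulo the first sufficiently many primes distinguish any two T-sparse polynomials of partial degree < D. -/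
open scoped Classical
open Polynomial

/-- Base-D representations are unique. -/
lemma baseD_inj {n D : ℕ} (a b : Fin n → ℕ) (ha : ∀ i, a i < D) (hb : ∀ i, b i < D)
    (h : ∑ i, a i * D ^ (i : ℕ) = ∑ i, b i * D ^ (i : ℕ)) : a = b := by
  induction n with
  | zero => funext i; exact absurd i.2 (by omega)
  | succ n ih =>
    have key : ∀ c : Fin (n+1) → ℕ,
        ∑ i, c i * D ^ (i : ℕ) = c 0 + D * ∑ i : Fin n, c i.succ * D ^ (i : ℕ) := by
      intro c
      rw [Fin.sum_univ_succ, Finset.mul_sum]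
      simp [pow_succ, mul_comm, mul_assoc, mul_left_comm]
    rw [key, key] at h
    have hD : 0 < D := lt_of_le_of_lt (Nat.zero_le _) (ha 0)
    have h0 : a 0 = b 0 := by
      have := congrArg (· % D) h
      simpa [Nat.add_mul_mod_self_left, Nat.mod_eq_of_lt (ha 0), Nat.mod_eq_of_lt (hb 0)]
        using this
    have htail : (fun i : Fin n => a i.succ) = (fun i : Fin n => b i.succ) := by
      apply ih
      · intro i; exact ha i.succ
      · intro i; exact hb i.succ
      · have : D * ∑ i : Fin n, a i.succ * D ^ (i:ℕ) = D * ∑ i : Fin n, b i.succ * D ^ (i:ℕ) := by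
          omega
        exact Nat.eq_of_mul_eq_mul_left hD this
    funext i
    rcases Fin.eq_zero_or_eq_succ i with h' | ⟨j, rfl⟩
    · rw [h']; exact h0
    · exact congrFun htail j

/-- Bound on base-D values. -/
lemma baseD_lt {n D : ℕ} (a : Fin n → ℕ) (ha : ∀ i, a i < D) :
    ∑ i, a i * D ^ (i : ℕ) < D ^ n := by
  induction n with
  | zero => simp
  | succ n ih =>
    have hD : 0 < D := lt_of_le_of_lt (Nat.zero_le _) (ha 0)
    have key : ∑ i : Fin (n+1), a i * D ^ (i : ℕ)
        = a 0 + D * ∑ i : Fin n, a i.succ * D ^ (i : ℕ) := by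
      rw [Fin.sum_univ_succ, Finset.mul_sum]
      simp [pow_succ, mul_comm, mul_assoc, mul_left_comm]
    rw [key]
    have hS : ∑ i : Fin n, a i.succ * D ^ (i:ℕ) < D ^ n := ih _ (fun i => ha i.succ)
    have hmul : D * ∑ i : Fin n, a i.succ * D ^ (i:ℕ) + D ≤ D * D ^ n := by
      have h2 : D * (∑ i : Fin n, a i.succ * D ^ (i:ℕ) + 1) ≤ D * D ^ n :=
        Nat.mul_le_mul_left D hS
      have h1 : D * ∑ i : Fin n, a i.succ * D ^ (i:ℕ) + D
          = D * (∑ i : Fin n, a i.succ * D ^ (i:ℕ) + 1) := by ring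
      omega
    have h0 := ha 0
    have : D ^ (n+1) = D * D ^ n := by ring
    omega

lemma kron_coeff {F : Type*} [Field F] {n D : ℕ} (f : MvPolynomial (Fin n) F)
    (hfD : ∀ a ∈ f.support, ∀ i, a i < D) (a : (Fin n) →₀ ℕ) (haD : ∀ i, a i < D) :
    (kronPoly (fun i => D ^ (i:ℕ)) f).coeff (∑ i, a i * D ^ (i:ℕ)) = f.coeff a := by
  classical
  unfold kronPoly
  rw [Polynomial.finset_sum_coeff]
  have hterm : ∀ b ∈ f.support,
      (Polynomial.C (f.coeff b) * Polynomial.X ^ (∑ i, b i * D ^ (i:ℕ))).coeff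
        (∑ i, a i * D ^ (i:ℕ))
      = if (b : (Fin n) →₀ ℕ) = a then f.coeff b else 0 := by
    intro b hb
    rw [Polynomial.coeff_C_mul, Polynomial.coeff_X_pow]
    by_cases hba : (b : (Fin n) →₀ ℕ) = a
    · subst hba; simp
    · have : ∑ i, b i * D ^ (i:ℕ) ≠ ∑ i, a i * D ^ (i:ℕ) := by
        intro hsum
        exact hba (Finsupp.ext (congrFun
          (baseD_inj (fun i => b i) (fun i => a i) (hfD b hb) haD hsum)))
      simp only [hba, if_false]
      rw [if_neg (Ne.symm this), mul_zero]
  rw [Finset.sum_congr rfl hterm]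
  by_cases ha : (a : (Fin n) →₀ ℕ) ∈ f.support
  · rw [Finset.sum_ite_eq' f.support a (fun b => f.coeff b)]
    · simp [ha]
  · rw [Finset.sum_ite_eq' f.support a (fun b => f.coeff b)]
    simp only [ha, if_neg]
    simp only [MvPolynomial.mem_support_iff, not_not] at ha
    simp [ha]

lemma kron_support {F : Type*} [Field F] {n : ℕ} (s : Fin n → ℕ)
    (f : MvPolynomial (Fin n) F) :
    (kronPoly s f).support ⊆ f.support.image (fun a => ∑ i, a i * s i) := by
  classical
  unfold kronPoly
  intro k hk
  rw [Polynomial.mem_support_iff, Polynomial.finset_sum_coeff] at hk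
  obtain ⟨a, ha, hne⟩ := Finset.exists_ne_zero_of_sum_ne_zero hk
  rw [Polynomial.coeff_C_mul, Polynomial.coeff_X_pow] at hne
  have : ∑ i, a i * s i = k := by
    by_contra h; simp [h] at hne
    exact h hne.1.symm
  exact Finset.mem_image.mpr ⟨a, ha, this⟩

lemma exists_collision {F : Type*} [Field F] (h : Polynomial F) (hne : h ≠ 0)
    {p : ℕ} (hp : 0 < p) (hdvd : (X ^ p - 1 : Polynomial F) ∣ h) :
    ∃ e' ∈ h.support, e' ≠ h.natDegree ∧ e' % p = h.natDegree % p := by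
  classical
  set d : Polynomial F := X ^ p - 1 with hd_def
  have hd1 : d = X ^ p - C 1 := by rw [hd_def, map_one]
  have hddeg : d.degree = p := by rw [hd1]; exact degree_X_pow_sub_C hp 1
  set r : Polynomial F := ∑ e ∈ h.support, C (h.coeff e) * X ^ (e % p) with hr_def
  have hdr : d ∣ (h - r) := by
    have hsplit : h - r = ∑ e ∈ h.support, C (h.coeff e) * (X ^ e - X ^ (e % p)) := by
      rw [hr_def]
      nth_rewrite 1 [as_sum_support_C_mul_X_pow h]
      rw [← Finset.sum_sub_distrib]
      exact Finset.sum_congr rfl (fun e _ => by ring)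
    rw [hsplit]
    refine Finset.dvd_sum (fun e _ => ?_)
    refine Dvd.dvd.mul_left ?_ _
    have he : X ^ e - X ^ (e % p) = X ^ (e % p) * ((X ^ p) ^ (e / p) - 1 : Polynomial F) := by
      rw [mul_sub, mul_one, ← pow_mul, ← pow_add]
      rw [Nat.add_comm, Nat.div_add_mod]
    rw [he]
    refine Dvd.dvd.mul_left ?_ _
    have := sub_dvd_pow_sub_pow (X ^ p : Polynomial F) 1 (e / p)
    simpa using this
  have hdr' : d ∣ r := by
    have := dvd_sub hdvd hdr
    simpa using this
  have hrdeg : r.degree < d.degree := by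
    rw [hddeg]
    refine lt_of_le_of_lt (Polynomial.degree_sum_le _ _) ?_
    rw [Finset.sup_lt_iff (by exact_mod_cast WithBot.bot_lt_coe p)]
    intro e _
    refine lt_of_le_of_lt (Polynomial.degree_C_mul_X_pow_le _ _) ?_
    exact_mod_cast Nat.cast_lt.mpr (Nat.mod_lt e hp)
  have hr0 : r = 0 := Polynomial.eq_zero_of_dvd_of_degree_lt hdr' hrdeg
  by_contra hcon
  push_neg at hcon
  have hcoeff : r.coeff (h.natDegree % p)
      = ∑ e ∈ h.support, if e % p = h.natDegree % p then h.coeff e else 0 := by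
    rw [hr_def, Polynomial.finset_sum_coeff]
    refine Finset.sum_congr rfl (fun e _ => ?_)
    rw [Polynomial.coeff_C_mul, Polynomial.coeff_X_pow]
    rcases eq_or_ne (e % p) (h.natDegree % p) with he | he
    · simp [he]
    · rw [if_neg (Ne.symm he), mul_zero, if_neg he]
  have hnd : h.natDegree ∈ h.support := Polynomial.natDegree_mem_support_of_nonzero hne
  have hsum : (∑ e ∈ h.support, if e % p = h.natDegree % p then h.coeff e else 0)
      = h.coeff h.natDegree := by
    rw [Finset.sum_eq_single h.natDegree]
    · simp
    · intro b hb hbne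
      rw [if_neg (hcon b hb hbne)]
    · intro hnotmem; exact absurd hnd hnotmem
  rw [hr0] at hcoeff
  simp only [Polynomial.coeff_zero] at hcoeff
  rw [hsum] at hcoeff
  exact (Polynomial.mem_support_iff.mp hnd) hcoeff.symm

/-- sufficiently many prime reductions of the Kronecker images
distinguish any two T-sparse polynomials with partial degrees < D. -/
theorem stmt17 (F : Type*) [Field F] (n T D N : ℕ)
    (f g : MvPolynomial (Fin n) F)
    (hfT : f.support.card ≤ T) (hgT : g.support.card ≤ T)
    (hfD : ∀ a ∈ f.support, ∀ i, a i < D)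
    (hgD : ∀ a ∈ g.support, ∀ i, a i < D)
    (hne : f ≠ g)
    (hN : N = max 1 ⌈(2 * (n : ℝ) * (2 * (T : ℝ) - 1)) * Real.logb 2 D⌉₊)
    (p : Fin N → ℕ) (hp : ∀ j, (p j).Prime) (hinj : Function.Injective p)
    (s : Fin n → ℕ) (hs : ∀ i, s i = D ^ (i : ℕ)) :
    ∃ j, kronPoly s f %ₘ (X ^ p j - 1) ≠ kronPoly s g %ₘ (X ^ p j - 1) := by
  classical
  have hs' : s = fun i : Fin n => D ^ (i : ℕ) := funext hs
  subst hs'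
  have hN1 : 1 ≤ N := hN ▸ le_max_left _ _
  have hN2 : ⌈(2 * (n : ℝ) * (2 * (T : ℝ) - 1)) * Real.logb 2 D⌉₊ ≤ N :=
    hN ▸ le_max_right _ _
  -- the witness exponent
  obtain ⟨a, ha⟩ : ∃ a, f.coeff a ≠ g.coeff a := by
    by_contra hcon; push_neg at hcon
    exact hne (MvPolynomial.ext _ _ hcon)
  have hamem : a ∈ f.support ∪ g.support := by
    rw [Finset.mem_union, MvPolynomial.mem_support_iff, MvPolynomial.mem_support_iff]
    by_contra hc; push_neg at hc
    rw [hc.1, hc.2] at ha; exact ha rfl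
  have haD : ∀ i, a i < D := by
    rcases Finset.mem_union.mp hamem with h' | h'
    · exact hfD a h'
    · exact hgD a h'
  set h : Polynomial F :=
    kronPoly (fun i => D ^ (i:ℕ)) f - kronPoly (fun i => D ^ (i:ℕ)) g with hh_def
  have hh0 : h ≠ 0 := by
    intro h0
    apply ha
    have := congrArg (fun q => Polynomial.coeff q (∑ i, a i * D ^ (i:ℕ))) h0
    simp only [hh_def, Polynomial.coeff_sub, Polynomial.coeff_zero] at this
    rw [kron_coeff f hfD a haD, kron_coeff g hgD a haD] at this
    exact sub_eq_zero.mp this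
  -- support facts
  have hsupp : h.support ⊆
      (kronPoly (fun i => D ^ (i:ℕ)) f).support ∪ (kronPoly (fun i => D ^ (i:ℕ)) g).support := by
    intro e he
    rw [Polynomial.mem_support_iff, hh_def, Polynomial.coeff_sub] at he
    rw [Finset.mem_union, Polynomial.mem_support_iff, Polynomial.mem_support_iff]
    by_contra hc; push_neg at hc
    rw [hc.1, hc.2, sub_zero] at he; exact he rfl
  have hcard : h.support.card ≤ 2 * T := by
    refine le_trans (Finset.card_le_card hsupp) ?_
    refine le_trans (Finset.card_union_le _ _) ?_
    have h1 := Finset.card_le_card (kron_support (fun i => D ^ (i:ℕ)) f)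
    have h2 := Finset.card_le_card (kron_support (fun i => D ^ (i:ℕ)) g)
    have h3 := Finset.card_image_le (s := f.support) (f := fun a => ∑ i, a i * D ^ (i:ℕ))
    have h4 := Finset.card_image_le (s := g.support) (f := fun a => ∑ i, a i * D ^ (i:ℕ))
    omega
  have hlt : ∀ e ∈ h.support, e < D ^ n := by
    intro e he
    rcases Finset.mem_union.mp (hsupp he) with h' | h'
    · obtain ⟨b, hb, rfl⟩ := Finset.mem_image.mp (kron_support _ f h')
      exact baseD_lt (fun i => b i) (hfD b hb)
    · obtain ⟨b, hb, rfl⟩ := Finset.mem_image.mp (kron_support _ g h')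
      exact baseD_lt (fun i => b i) (hgD b hb)
  have hT1 : 1 ≤ T := by
    have : 0 < h.support.card := Finset.card_pos.mpr ⟨h.natDegree,
      Polynomial.natDegree_mem_support_of_nonzero hh0⟩
    omega
  have hDn : 1 ≤ D ^ n := by
    have := hlt h.natDegree (Polynomial.natDegree_mem_support_of_nonzero hh0)
    omega
  -- contradiction setup
  by_contra hcon
  push_neg at hcon
  have hdvd : ∀ j, (X ^ p j - 1 : Polynomial F) ∣ h := by
    intro j
    have hmono : (X ^ p j - 1 : Polynomial F).Monic := by
      have h1 : (X ^ p j - C 1 : Polynomial F).Monic :=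
        Polynomial.monic_X_pow_sub_C 1 (hp j).pos.ne'
      simpa using h1
    rw [← Polynomial.modByMonic_eq_zero_iff_dvd hmono, hh_def,
      Polynomial.sub_modByMonic, hcon j, sub_self]
  set e0 := h.natDegree with he0_def
  have he0 : e0 ∈ h.support := Polynomial.natDegree_mem_support_of_nonzero hh0
  set M : ℕ := ∏ e' ∈ h.support.erase e0, (e0 - e') with hM_def
  have hMpos : 0 < M := by
    refine Finset.prod_pos (fun e' he' => ?_)
    have h1 := Finset.mem_erase.mp he'
    have h2 : e' ≤ e0 := Polynomial.le_natDegree_of_mem_supp e' h1.2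
    omega
  have hpdvdM : ∀ j, p j ∣ M := by
    intro j
    obtain ⟨e', he'mem, he'ne, he'mod⟩ := exists_collision h hh0 (hp j).pos (hdvd j)
    have h2 : e' ≤ e0 := Polynomial.le_natDegree_of_mem_supp e' he'mem
    have h3 : p j ∣ e0 - e' := (Nat.modEq_iff_dvd' h2).mp he'mod
    exact h3.trans (Finset.dvd_prod_of_mem _ (Finset.mem_erase.mpr ⟨he'ne, he'mem⟩))
  -- product of primes divides M
  have hproddvd : (∏ q ∈ Finset.image p Finset.univ, q) ∣ M := by
    refine Finset.prod_primes_dvd M (fun q hq => ?_) (fun q hq => ?_)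
    · obtain ⟨j, _, rfl⟩ := Finset.mem_image.mp hq
      exact (hp j).prime
    · obtain ⟨j, _, rfl⟩ := Finset.mem_image.mp hq
      exact hpdvdM j
  have hcardim : (Finset.image p Finset.univ).card = N := by
    rw [Finset.card_image_of_injective _ hinj, Finset.card_univ, Fintype.card_fin]
  have h2N : 2 ^ N ≤ M := by
    calc 2 ^ N = 2 ^ (Finset.image p Finset.univ).card := by rw [hcardim]
      _ ≤ ∏ q ∈ Finset.image p Finset.univ, q := by
          refine Finset.pow_card_le_prod _ _ _ (fun q hq => ?_)
          obtain ⟨j, _, rfl⟩ := Finset.mem_image.mp hq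
          exact (hp j).two_le
      _ ≤ M := Nat.le_of_dvd hMpos hproddvd
  have hMle : M ≤ (D ^ n) ^ (2 * T - 1) := by
    calc M ≤ (D ^ n) ^ (h.support.erase e0).card := by
          refine Finset.prod_le_pow_card _ _ _ (fun e' he' => ?_)
          have := Polynomial.le_natDegree_of_mem_supp e' (Finset.mem_erase.mp he').2
          have := hlt e0 he0
          omega
      _ ≤ (D ^ n) ^ (2 * T - 1) := by
          refine Nat.pow_le_pow_right hDn ?_
          have := Finset.card_erase_of_mem he0
          omega
  -- real analysis part
  set K : ℕ := n * (2 * T - 1) with hK_def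
  have hkey : 2 ^ N ≤ D ^ K := by
    rw [hK_def, pow_mul]; exact h2N.trans hMle
  have hreal : (N : ℝ) ≤ (K : ℝ) * Real.logb 2 D := by
    have h1 : ((2:ℝ)) ^ N ≤ ((D:ℝ)) ^ K := by exact_mod_cast hkey
    have h2 : Real.logb 2 ((2:ℝ) ^ N) ≤ Real.logb 2 ((D:ℝ) ^ K) :=
      Real.logb_le_logb_of_le one_lt_two (by positivity) h1
    rw [Real.logb_pow, Real.logb_pow, Real.logb_self_eq_one one_lt_two] at h2
    simpa using h2
  have hKcast : (K : ℝ) = (n : ℝ) * (2 * (T : ℝ) - 1) := by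
    rw [hK_def]
    push_cast [Nat.cast_sub (by omega : 1 ≤ 2 * T)]
    ring
  have hceil : 2 * (n : ℝ) * (2 * (T : ℝ) - 1) * Real.logb 2 D ≤ (N : ℝ) := by
    refine le_trans (Nat.le_ceil _) ?_
    exact_mod_cast hN2
  rw [hKcast] at hreal
  have hN1' : (1 : ℝ) ≤ (N : ℝ) := by exact_mod_cast hN1
  nlinarith [hreal, hceil, hN1']
end
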